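/- Let A_1 be an n_1×n_2 complex matrix, let A be the (n_1+n_2)×(n_1+n_2) block matrix [[0, A_1], [0, 0]], and let A''' be the 2×2 matrix [[0, γ(A_1)], [0, 0]], where γ(A_1) is the reduced minimum modulus of A_1. Then w(A) = w(A''') if and only if A is unitarily similar to a direct sum A''' ⊕ ⋯ ⊕ A''' ⊕ 0, consisting of finitely many copies of A''' together with a zero matrix. -/

import Mathlib

/-! For `A = [[0, A₁], [0, 0]]` one has `⟨Ax, x⟩ = ⟨A₁ x₂, x₁⟩`, hence `w(A) = ‖A₁‖ / 2`: AM–GM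
gives `≤`, and `x = (u, v)` with `u` a multiple of `A₁ v` of the same length as `v` gives `≥`. In
particular `w(A''') = γ / 2` for `γ = γ(A₁)`, so `w(A) = w(A''')` says `‖A₁‖ = γ`. Since
`γ ‖v‖ ≤ ‖A₁ v‖ ≤ ‖A₁‖ ‖v‖` on `(ker A₁)ᗮ`, this means that `A₁` is `γ` times an isometry there:
an orthonormal basis `eᵢ` of `(ker A₁)ᗮ` is mapped to `γ fᵢ` with `fᵢ` orthonormal. In an
orthonormal basis beginning with the pairs `(fᵢ, 0), (0, eᵢ)` the matrix of `A` is
`A''' ⊕ ⋯ ⊕ A''' ⊕ 0`. Conversely, such a direct sum has operator norm at most `γ`, unitary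
similarity preserves the operator norm, and `γ ≤ ‖A₁‖` always. -/

/-- The numerical radius `w(M)` of a square complex matrix, acting on Euclidean space:
`w(M) = sup {|⟨Mx, x⟩| : ‖x‖ = 1}` (here `inner x (M x)` is Mathlib's inner product, conjugate
linear in the first variable, so it equals the paper's `⟨Mx, x⟩`). -/
noncomputable def numRadius {ι : Type*} [Fintype ι] [DecidableEq ι] (M : Matrix ι ι ℂ) : ℝ :=
  sSup {r : ℝ | ∃ x : EuclideanSpace ℂ ι, ‖x‖ = 1 ∧
    ‖(inner ℂ x (Matrix.toEuclideanLin M x) : ℂ)‖ = r}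

open Classical in
/-- The reduced minimum modulus `γ(A) = min {‖Ax‖ : ‖x‖ = 1, x ⊥ ker A}` for `A ≠ 0`,
and `γ(0) = 0`. -/
noncomputable def reducedMinModulus {m n : Type*} [Fintype m] [Fintype n] [DecidableEq n]
    (A : Matrix m n ℂ) : ℝ :=
  if A = 0 then 0 else
    sInf {r : ℝ | ∃ x : EuclideanSpace ℂ n, ‖x‖ = 1 ∧
      x ∈ (LinearMap.ker (Matrix.toEuclideanLin A))ᗮ ∧ ‖Matrix.toEuclideanLin A x‖ = r}

/-- Two square complex matrices (possibly indexed by different finite types) are unitarily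
similar if a unitary operator, i.e. a linear isometric equivalence of the underlying Euclidean
spaces, intertwines the induced operators. -/
def UnitarilySimilar {ι κ : Type*} [Fintype ι] [Fintype κ] [DecidableEq ι] [DecidableEq κ]
    (A : Matrix ι ι ℂ) (B : Matrix κ κ ℂ) : Prop :=
  ∃ U : EuclideanSpace ℂ ι ≃ₗᵢ[ℂ] EuclideanSpace ℂ κ,
    ∀ x, U (Matrix.toEuclideanLin A x) = Matrix.toEuclideanLin B (U x)

open scoped InnerProductSpace Matrix.Norms.L2Operator
open Matrix

namespace EuclideanSpace

variable {𝕜 ι κ : Type*}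

def sumElim (u : EuclideanSpace 𝕜 ι) (v : EuclideanSpace 𝕜 κ) : EuclideanSpace 𝕜 (ι ⊕ κ) :=
  WithLp.toLp 2 (Sum.elim u.ofLp v.ofLp)

def sumLeft (x : EuclideanSpace 𝕜 (ι ⊕ κ)) : EuclideanSpace 𝕜 ι :=
  WithLp.toLp 2 fun i => x (Sum.inl i)

def sumRight (x : EuclideanSpace 𝕜 (ι ⊕ κ)) : EuclideanSpace 𝕜 κ :=
  WithLp.toLp 2 fun k => x (Sum.inr k)

@[simp] lemma sumElim_sumLeft_sumRight (x : EuclideanSpace 𝕜 (ι ⊕ κ)) :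
    sumElim (sumLeft x) (sumRight x) = x := by
  ext (i | k) <;> rfl

@[simp] lemma sumLeft_sumElim (u : EuclideanSpace 𝕜 ι) (v : EuclideanSpace 𝕜 κ) :
    sumLeft (sumElim u v) = u := rfl

@[simp] lemma sumRight_sumElim (u : EuclideanSpace 𝕜 ι) (v : EuclideanSpace 𝕜 κ) :
    sumRight (sumElim u v) = v := rfl

section RCLike

variable [RCLike 𝕜]

@[simp] lemma sumElim_zero_zero : (sumElim 0 0 : EuclideanSpace 𝕜 (ι ⊕ κ)) = 0 := by
  ext (i | k) <;> rfl

lemma sumElim_smul (c : 𝕜) (u : EuclideanSpace 𝕜 ι) (v : EuclideanSpace 𝕜 κ) :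
    sumElim (c • u) (c • v) = c • sumElim u v := by
  ext (i | k) <;> rfl

variable [Fintype ι] [Fintype κ]

lemma inner_sumElim (u u' : EuclideanSpace 𝕜 ι) (v v' : EuclideanSpace 𝕜 κ) :
    ⟪sumElim u v, sumElim u' v'⟫_𝕜 = ⟪u, u'⟫_𝕜 + ⟪v, v'⟫_𝕜 := by
  simp [sumElim, PiLp.inner_apply, Fintype.sum_sum_type]

lemma norm_sumElim_sq (u : EuclideanSpace 𝕜 ι) (v : EuclideanSpace 𝕜 κ) :
    ‖sumElim u v‖ ^ 2 = ‖u‖ ^ 2 + ‖v‖ ^ 2 := by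
  simp only [← inner_self_eq_norm_sq (𝕜 := 𝕜), inner_sumElim, map_add]

lemma norm_sq_eq_sumLeft_sumRight (x : EuclideanSpace 𝕜 (ι ⊕ κ)) :
    ‖x‖ ^ 2 = ‖sumLeft x‖ ^ 2 + ‖sumRight x‖ ^ 2 := by
  rw [← norm_sumElim_sq, sumElim_sumLeft_sumRight]

lemma norm_sumElim_zero_right (u : EuclideanSpace 𝕜 ι) :
    ‖sumElim u (0 : EuclideanSpace 𝕜 κ)‖ = ‖u‖ :=
  (sq_eq_sq₀ (norm_nonneg _) (norm_nonneg _)).mp (by simp [norm_sumElim_sq])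

lemma norm_sumElim_zero_left (v : EuclideanSpace 𝕜 κ) :
    ‖sumElim (0 : EuclideanSpace 𝕜 ι) v‖ = ‖v‖ :=
  (sq_eq_sq₀ (norm_nonneg _) (norm_nonneg _)).mp (by simp [norm_sumElim_sq])

lemma norm_sumRight_le (x : EuclideanSpace 𝕜 (ι ⊕ κ)) : ‖sumRight x‖ ≤ ‖x‖ :=
  (sq_le_sq₀ (norm_nonneg _) (norm_nonneg _)).mp
    (by rw [norm_sq_eq_sumLeft_sumRight x]; exact le_add_of_nonneg_left (sq_nonneg _))

lemma orthonormal_sumElim_pair {α : Type*} {u : α → EuclideanSpace 𝕜 ι}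
    {v : α → EuclideanSpace 𝕜 κ} (hu : Orthonormal 𝕜 u) (hv : Orthonormal 𝕜 v) :
    Orthonormal 𝕜 fun ka : Fin 2 × α => ![sumElim (u ka.2) 0, sumElim 0 (v ka.2)] ka.1 := by
  classical
  rw [orthonormal_iff_ite] at hu hv ⊢
  rintro ⟨k, a⟩ ⟨k', a'⟩
  fin_cases k <;> fin_cases k' <;> simp [inner_sumElim, hu, hv]

end RCLike

end EuclideanSpace

open EuclideanSpace

lemma Orthonormal.exists_orthonormalBasis_sum {𝕜 E α : Type*} [RCLike 𝕜] [NormedAddCommGroup E]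
    [InnerProductSpace 𝕜 E] [FiniteDimensional 𝕜 E] [Fintype α] {v : α → E}
    (hv : Orthonormal 𝕜 v) : ∃ q : ℕ, ∃ b : OrthonormalBasis (α ⊕ Fin q) 𝕜 E,
      ∀ a, b (Sum.inl a) = v a := by
  set q := Module.finrank 𝕜 E - Fintype.card α
  have hcard : Module.finrank 𝕜 E = Fintype.card (α ⊕ Fin q) := by
    have := hv.linearIndependent.fintype_card_le_finrank
    simp only [Fintype.card_sum, Fintype.card_fin]
    omega
  have hv' :
      Orthonormal 𝕜 ((Set.range (Sum.inl : α → α ⊕ Fin q)).domRestrict (Sum.elim v 0)) := by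
    classical
    rw [orthonormal_iff_ite] at hv ⊢
    rintro ⟨_, a, rfl⟩ ⟨_, a', rfl⟩
    simpa [Set.domRestrict, Subtype.ext_iff] using hv a a'
  obtain ⟨b, hb⟩ := hv'.exists_orthonormalBasis_extension_of_card_eq hcard
  exact ⟨_, b, fun a => hb _ ⟨a, rfl⟩⟩

lemma LinearMap.exists_orthonormalBasis_ker_orthogonal_map_eq_smul {𝕜 E F : Type*} [RCLike 𝕜]
    [NormedAddCommGroup E] [InnerProductSpace 𝕜 E] [FiniteDimensional 𝕜 E]
    [NormedAddCommGroup F] [InnerProductSpace 𝕜 F] (T : E →ₗ[𝕜] F) {c : ℝ} (hc : 0 ≤ c)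
    (h : ∀ v ∈ (LinearMap.ker T)ᗮ, ‖T v‖ = c * ‖v‖) :
    ∃ p : ℕ, ∃ e : OrthonormalBasis (Fin p) 𝕜 (LinearMap.ker T)ᗮ, ∃ f : Fin p → F,
      Orthonormal 𝕜 f ∧ ∀ i, T (e i) = (c : 𝕜) • f i := by
  set K := (LinearMap.ker T)ᗮ
  let e := stdOrthonormalBasis 𝕜 K
  refine ⟨_, e, fun i => (c⁻¹ : 𝕜) • T (e i), ?_, fun i => ?_⟩
  · rcases hc.eq_or_lt with rfl | hc
    · -- for `c = 0` the space `K` is trivial, so the family is empty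
      have hK : ∀ i, False := fun i => by
        have hker : ((e i : K) : E) ∈ LinearMap.ker T := by simpa using h _ (e i).2
        have h0 := inner_self_eq_zero.mp (Submodule.inner_right_of_mem_orthogonal hker (e i).2)
        have h1 := e.orthonormal.1 i
        rw [Submodule.coe_eq_zero.mp h0, norm_zero] at h1
        exact zero_ne_one h1
      exact ⟨fun i => (hK i).elim, fun i => (hK i).elim⟩
    let S : K →ₗᵢ[𝕜] F :=
      { toLinearMap := (c⁻¹ : 𝕜) • (T ∘ₗ K.subtype)
        norm_map' := fun v => by
          simp [norm_smul, h _ v.2, abs_of_pos hc, hc.ne'] }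
    exact e.orthonormal.comp_linearIsometry S
  · rcases hc.eq_or_lt with rfl | hc
    · simpa using h _ (e i).2
    · rw [smul_inv_smul₀ (by exact_mod_cast hc.ne')]

lemma Matrix.norm_toEuclideanLin_apply_le {m n : Type*} [Fintype m] [Fintype n] [DecidableEq n]
    (A : Matrix m n ℂ) (x : EuclideanSpace ℂ n) : ‖toEuclideanLin A x‖ ≤ ‖A‖ * ‖x‖ :=
  A.l2_opNorm_mulVec x

lemma Matrix.l2_opNorm_le_of_forall {m n : Type*} [Fintype m] [Fintype n] [DecidableEq n]
    {A : Matrix m n ℂ} {C : ℝ} (hC : 0 ≤ C)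
    (h : ∀ x : EuclideanSpace ℂ n, ‖toEuclideanLin A x‖ ≤ C * ‖x‖) : ‖A‖ ≤ C :=
  ContinuousLinearMap.opNorm_le_bound _ hC h

section ReducedMinModulus

variable {m n : Type*} [Fintype m] [Fintype n] [DecidableEq n]

lemma reducedMinModulus_nonneg (A : Matrix m n ℂ) : 0 ≤ reducedMinModulus A := by
  unfold reducedMinModulus
  split_ifs
  · exact le_rfl
  · exact Real.sInf_nonneg fun _ ⟨_, _, _, hr⟩ => hr ▸ norm_nonneg _

lemma reducedMinModulus_mul_norm_le (A : Matrix m n ℂ) {v : EuclideanSpace ℂ n}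
    (hv : v ∈ (LinearMap.ker (toEuclideanLin A))ᗮ) :
    reducedMinModulus A * ‖v‖ ≤ ‖toEuclideanLin A v‖ := by
  by_cases hA : A = 0
  · simp [reducedMinModulus, hA]
  rcases eq_or_ne v 0 with rfl | hv0
  · simp
  have hpos : 0 < ‖v‖ := norm_pos_iff.mpr hv0
  have hunit : ‖(‖v‖⁻¹ : ℂ) • v‖ = 1 := by
    rw [norm_smul, norm_inv, Complex.norm_real, norm_norm, inv_mul_cancel₀ hpos.ne']
  have hle : reducedMinModulus A ≤ ‖toEuclideanLin A ((‖v‖⁻¹ : ℂ) • v)‖ := by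
    rw [reducedMinModulus, if_neg hA]
    exact csInf_le ⟨0, fun _ ⟨_, _, _, hr⟩ => hr ▸ norm_nonneg _⟩
      ⟨_, hunit, Submodule.smul_mem _ _ hv, rfl⟩
  rwa [map_smul, norm_smul, norm_inv, Complex.norm_real, norm_norm, ← div_eq_inv_mul,
    le_div_iff₀ hpos] at hle

lemma reducedMinModulus_le_l2_opNorm (A : Matrix m n ℂ) : reducedMinModulus A ≤ ‖A‖ := by
  by_cases hA : A = 0
  · simp [reducedMinModulus, hA]
  have hker : LinearMap.ker (toEuclideanLin A) ≠ ⊤ := by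
    rwa [Ne, LinearMap.ker_eq_top, LinearEquiv.map_eq_zero_iff]
  obtain ⟨v, hv, hv0⟩ := Submodule.ne_bot_iff _ |>.mp
    (mt Submodule.orthogonal_eq_bot_iff.mp hker)
  have hpos : 0 < ‖v‖ := norm_pos_iff.mpr hv0
  exact le_of_mul_le_mul_right
    ((reducedMinModulus_mul_norm_le A hv).trans (A.norm_toEuclideanLin_apply_le v)) hpos

end ReducedMinModulus

section SuperdiagBlockSum

def superdiagBlockSum (p q : ℕ) (c : ℂ) :
    Matrix (Fin 2 × Fin p ⊕ Fin q) (Fin 2 × Fin p ⊕ Fin q) ℂ :=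
  fromBlocks (blockDiagonal fun _ : Fin p => !![0, c; 0, 0]) 0 0 0

variable {p q : ℕ} {c : ℂ}

lemma superdiagBlockSum_mulVec (z : Fin 2 × Fin p ⊕ Fin q → ℂ) :
    superdiagBlockSum p q c *ᵥ z =
      Sum.elim (fun ki => if ki.1 = 0 then c * z (Sum.inl (1, ki.2)) else 0) 0 := by
  ext (⟨k, i⟩ | k)
  · fin_cases k <;> simp [superdiagBlockSum, mulVec, dotProduct,
      blockDiagonal_apply, Fintype.sum_prod_type, Fin.sum_univ_two]
  · simp [superdiagBlockSum, fromBlocks_mulVec]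

lemma l2_opNorm_superdiagBlockSum_le : ‖superdiagBlockSum p q c‖ ≤ ‖c‖ := by
  refine l2_opNorm_le_of_forall (norm_nonneg c) fun z => ?_
  refine (sq_le_sq₀ (norm_nonneg _) (by positivity)).mp ?_
  calc ‖toEuclideanLin (superdiagBlockSum p q c) z‖ ^ 2
      = ‖c‖ ^ 2 * ∑ i, ‖z (Sum.inl (1, i))‖ ^ 2 := by
        simp [EuclideanSpace.norm_sq_eq, toLpLin_apply, superdiagBlockSum_mulVec,
          Fintype.sum_sum_type, Fintype.sum_prod_type, Fin.sum_univ_two, mul_pow, Finset.mul_sum]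
    _ ≤ ‖c‖ ^ 2 * ‖z‖ ^ 2 := by
        gcongr
        rw [EuclideanSpace.norm_sq_eq, Fintype.sum_sum_type, Fintype.sum_prod_type,
          Fin.sum_univ_two]
        exact le_add_of_le_of_nonneg (le_add_of_nonneg_left (by positivity)) (by positivity)
    _ = (‖c‖ * ‖z‖) ^ 2 := (mul_pow _ _ _).symm

end SuperdiagBlockSum

section

variable {ι κ : Type*} [Fintype ι] [DecidableEq ι] [Fintype κ] [DecidableEq κ]

lemma numRadius_nonneg (M : Matrix ι ι ℂ) : 0 ≤ numRadius M :=
  Real.sSup_nonneg fun _ ⟨_, _, hr⟩ => hr ▸ norm_nonneg _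

lemma numRadius_le {M : Matrix ι ι ℂ} {r : ℝ} (hr : 0 ≤ r)
    (h : ∀ x : EuclideanSpace ℂ ι, ‖x‖ = 1 → ‖⟪x, toEuclideanLin M x⟫_ℂ‖ ≤ r) :
    numRadius M ≤ r :=
  Real.sSup_le (fun _ ⟨x, hx, hr⟩ => hr ▸ h x hx) hr

lemma norm_inner_le_numRadius (M : Matrix ι ι ℂ) {x : EuclideanSpace ℂ ι} (hx : ‖x‖ = 1) :
    ‖⟪x, toEuclideanLin M x⟫_ℂ‖ ≤ numRadius M := by
  refine le_csSup ⟨‖M‖, ?_⟩ ⟨x, hx, rfl⟩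
  rintro _ ⟨y, hy, rfl⟩
  calc ‖⟪y, toEuclideanLin M y⟫_ℂ‖ ≤ ‖y‖ * ‖toEuclideanLin M y‖ := norm_inner_le_norm _ _
    _ ≤ ‖M‖ := by simpa [hy] using M.norm_toEuclideanLin_apply_le y

lemma norm_inner_le_numRadius_mul_sq (M : Matrix ι ι ℂ) (x : EuclideanSpace ℂ ι) :
    ‖⟪x, toEuclideanLin M x⟫_ℂ‖ ≤ numRadius M * ‖x‖ ^ 2 := by
  rcases eq_or_ne x 0 with rfl | hx
  · simp
  have hx' : 0 < ‖x‖ := norm_pos_iff.mpr hx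
  have hunit : ‖(‖x‖⁻¹ : ℂ) • x‖ = 1 := by
    rw [norm_smul, norm_inv, Complex.norm_real, norm_norm, inv_mul_cancel₀ hx'.ne']
  have := norm_inner_le_numRadius M hunit
  rw [map_smul, inner_smul_left, inner_smul_right, norm_mul, norm_mul, map_inv₀,
    Complex.conj_ofReal, norm_inv, Complex.norm_real, norm_norm, ← mul_assoc] at this
  calc ‖⟪x, toEuclideanLin M x⟫_ℂ‖
      = ‖x‖ ^ 2 * (‖x‖⁻¹ * ‖x‖⁻¹ * ‖⟪x, toEuclideanLin M x⟫_ℂ‖) := by field_simp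
    _ ≤ ‖x‖ ^ 2 * numRadius M := by gcongr
    _ = numRadius M * ‖x‖ ^ 2 := mul_comm _ _

lemma UnitarilySimilar.numRadius_eq {A : Matrix ι ι ℂ} {B : Matrix κ κ ℂ}
    (h : UnitarilySimilar A B) : numRadius A = numRadius B := by
  obtain ⟨U, hU⟩ := h
  unfold numRadius
  congr 1
  ext r
  constructor
  · rintro ⟨x, hx, rfl⟩
    exact ⟨U x, by simpa using hx, by rw [← hU, U.inner_map_map]⟩
  · rintro ⟨y, hy, rfl⟩
    refine ⟨U.symm y, by simpa using hy, ?_⟩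
    rw [← U.inner_map_map, hU, U.apply_symm_apply]

lemma unitarilySimilar_of_orthonormalBasis {A : Matrix ι ι ℂ} {B : Matrix κ κ ℂ}
    (b : OrthonormalBasis κ ℂ (EuclideanSpace ℂ ι))
    (h : ∀ i j, b.repr (toEuclideanLin A (b j)) i = B i j) : UnitarilySimilar A B := by
  refine ⟨b.repr, fun x => ?_⟩
  suffices b.repr.toLinearMap ∘ₗ toEuclideanLin A = toEuclideanLin B ∘ₗ b.repr.toLinearMap from
    LinearMap.congr_fun this x
  refine b.toBasis.ext fun j => ?_
  ext i
  simpa [toLpLin_apply, mulVec_single_one] using h i j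

lemma UnitarilySimilar.l2_opNorm_le {A : Matrix ι ι ℂ} {B : Matrix κ κ ℂ}
    (h : UnitarilySimilar A B) : ‖A‖ ≤ ‖B‖ := by
  obtain ⟨U, hU⟩ := h
  refine l2_opNorm_le_of_forall (norm_nonneg B) fun x => ?_
  rw [← U.norm_map, hU, ← U.norm_map x]
  exact B.norm_toEuclideanLin_apply_le (U x)

lemma toEuclideanLin_fromBlocks_zero (A₁ : Matrix ι κ ℂ) (x : EuclideanSpace ℂ (ι ⊕ κ)) :
    toEuclideanLin (fromBlocks 0 A₁ 0 0 : Matrix (ι ⊕ κ) (ι ⊕ κ) ℂ) x =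
      sumElim (toEuclideanLin A₁ (sumRight x)) 0 := by
  ext (i | k) <;> simp [toLpLin_apply, fromBlocks_mulVec, sumElim, sumRight, Function.comp_def]

lemma inner_toEuclideanLin_fromBlocks_zero (A₁ : Matrix ι κ ℂ) (x : EuclideanSpace ℂ (ι ⊕ κ)) :
    ⟪x, toEuclideanLin (fromBlocks 0 A₁ 0 0 : Matrix (ι ⊕ κ) (ι ⊕ κ) ℂ) x⟫_ℂ =
      ⟪sumLeft x, toEuclideanLin A₁ (sumRight x)⟫_ℂ := by
  nth_rewrite 1 [← sumElim_sumLeft_sumRight x]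
  rw [toEuclideanLin_fromBlocks_zero, inner_sumElim, inner_zero_right, add_zero]

lemma l2_opNorm_fromBlocks_zero (A₁ : Matrix ι κ ℂ) :
    ‖(fromBlocks 0 A₁ 0 0 : Matrix (ι ⊕ κ) (ι ⊕ κ) ℂ)‖ = ‖A₁‖ := by
  refine le_antisymm (l2_opNorm_le_of_forall (norm_nonneg _) fun x => ?_)
    (l2_opNorm_le_of_forall (norm_nonneg _) fun v => ?_)
  · rw [toEuclideanLin_fromBlocks_zero, norm_sumElim_zero_right]
    exact (A₁.norm_toEuclideanLin_apply_le _).trans (by gcongr; exact norm_sumRight_le x)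
  · simpa [toEuclideanLin_fromBlocks_zero, norm_sumElim_zero_right, norm_sumElim_zero_left]
      using norm_toEuclideanLin_apply_le (fromBlocks 0 A₁ 0 0 : Matrix (ι ⊕ κ) (ι ⊕ κ) ℂ)
        (sumElim 0 v)

lemma numRadius_fromBlocks_zero_le (A₁ : Matrix ι κ ℂ) :
    numRadius (fromBlocks 0 A₁ 0 0 : Matrix (ι ⊕ κ) (ι ⊕ κ) ℂ) ≤ ‖A₁‖ / 2 := by
  refine numRadius_le (by positivity) fun x hx => ?_
  rw [inner_toEuclideanLin_fromBlocks_zero]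
  have hsq : ‖sumLeft x‖ ^ 2 + ‖sumRight x‖ ^ 2 = 1 := by
    rw [← norm_sq_eq_sumLeft_sumRight, hx, one_pow]
  calc ‖⟪sumLeft x, toEuclideanLin A₁ (sumRight x)⟫_ℂ‖
      ≤ ‖sumLeft x‖ * (‖A₁‖ * ‖sumRight x‖) :=
        (norm_inner_le_norm _ _).trans (by gcongr; exact A₁.norm_toEuclideanLin_apply_le _)
    _ ≤ ‖A₁‖ / 2 := by
        nlinarith [mul_nonneg (norm_nonneg A₁) (sq_nonneg (‖sumLeft x‖ - ‖sumRight x‖)),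
          congrArg (‖A₁‖ * ·) hsq]

lemma l2_opNorm_le_two_mul_numRadius_fromBlocks_zero (A₁ : Matrix ι κ ℂ) :
    ‖A₁‖ ≤ 2 * numRadius (fromBlocks 0 A₁ 0 0 : Matrix (ι ⊕ κ) (ι ⊕ κ) ℂ) := by
  set w := numRadius (fromBlocks 0 A₁ 0 0 : Matrix (ι ⊕ κ) (ι ⊕ κ) ℂ)
  have hw : 0 ≤ 2 * w := mul_nonneg zero_le_two (numRadius_nonneg _)
  refine l2_opNorm_le_of_forall hw fun v => ?_
  rcases eq_or_ne (toEuclideanLin A₁ v) 0 with hv | hv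
  · rw [hv, norm_zero]
    exact mul_nonneg hw (norm_nonneg v)
  have hAv : 0 < ‖toEuclideanLin A₁ v‖ := norm_pos_iff.mpr hv
  have hv0 : 0 < ‖v‖ := norm_pos_iff.mpr fun h => hv (by rw [h, map_zero])
  set u : EuclideanSpace ℂ ι := ((‖v‖ / ‖toEuclideanLin A₁ v‖ : ℝ) : ℂ) • toEuclideanLin A₁ v
  have hu : ‖u‖ = ‖v‖ := by
    rw [norm_smul, Complex.norm_real, Real.norm_of_nonneg (by positivity),
      div_mul_cancel₀ _ hAv.ne']
  have huv : ‖⟪u, toEuclideanLin A₁ v⟫_ℂ‖ = ‖v‖ * ‖toEuclideanLin A₁ v‖ := by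
    rw [inner_smul_left, inner_self_eq_norm_sq_to_K, Complex.conj_ofReal, norm_mul, norm_pow,
      Complex.norm_real, RCLike.norm_ofReal, abs_norm, Real.norm_of_nonneg (by positivity)]
    field_simp
  have key := norm_inner_le_numRadius_mul_sq
    (fromBlocks 0 A₁ 0 0 : Matrix (ι ⊕ κ) (ι ⊕ κ) ℂ) (sumElim u v)
  rw [inner_toEuclideanLin_fromBlocks_zero, sumLeft_sumElim, sumRight_sumElim, huv,
    norm_sumElim_sq, hu] at key
  nlinarith

lemma numRadius_fromBlocks_zero (A₁ : Matrix ι κ ℂ) :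
    numRadius (fromBlocks 0 A₁ 0 0 : Matrix (ι ⊕ κ) (ι ⊕ κ) ℂ) = ‖A₁‖ / 2 := by
  linarith [numRadius_fromBlocks_zero_le A₁, l2_opNorm_le_two_mul_numRadius_fromBlocks_zero A₁]

lemma unitarilySimilar_reindex (e : ι ≃ κ) (M : Matrix ι ι ℂ) :
    UnitarilySimilar M (reindex e e M) := by
  refine ⟨LinearIsometryEquiv.piLpCongrLeft 2 ℂ ℂ e, fun x => ?_⟩
  ext k
  simp [toLpLin_apply, submatrix_mulVec_equiv, Equiv.piCongrLeft'_apply, Function.comp_def]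

lemma superdiag_eq_reindex_fromBlocks (c : ℂ) :
    !![0, c; 0, 0] = reindex finSumFinEquiv finSumFinEquiv
      (fromBlocks 0 !![c] 0 0 : Matrix (Fin 1 ⊕ Fin 1) (Fin 1 ⊕ Fin 1) ℂ) := by
  ext i j
  fin_cases i <;> fin_cases j <;> rfl

lemma l2_opNorm_fin_one (c : ℂ) : ‖!![c]‖ = ‖c‖ := by
  rw [show !![c] = diagonal fun _ => c by ext i j; fin_cases i; fin_cases j; rfl,
    l2_opNorm_diagonal, pi_norm_const]

lemma numRadius_superdiag (c : ℂ) : numRadius !![0, c; 0, 0] = ‖c‖ / 2 := by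
  rw [superdiag_eq_reindex_fromBlocks, ← (unitarilySimilar_reindex _ _).numRadius_eq,
    numRadius_fromBlocks_zero, l2_opNorm_fin_one]

lemma toEuclideanLin_fromBlocks_zero_eq_zero_of_inner_eq_zero (A₁ : Matrix ι κ ℂ) {α : Type*}
    [Fintype α] (e : OrthonormalBasis α ℂ (LinearMap.ker (toEuclideanLin A₁))ᗮ)
    {y : EuclideanSpace ℂ (ι ⊕ κ)} (hy : ∀ i, ⟪sumElim 0 (e i : EuclideanSpace ℂ κ), y⟫_ℂ = 0) :
    toEuclideanLin (fromBlocks 0 A₁ 0 0 : Matrix (ι ⊕ κ) (ι ⊕ κ) ℂ) y = 0 := by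
  -- the `κ`-part of `y` is orthogonal to every `e i`, so it lies in `(ker A₁)ᗮᗮ = ker A₁`
  have horth : innerₛₗ ℂ (sumRight y) ∘ₗ Submodule.subtype _ = 0 :=
    e.toBasis.ext fun i => by
      have := hy i
      rw [← sumElim_sumLeft_sumRight y, inner_sumElim, inner_zero_left, zero_add,
        ← inner_conj_symm, map_eq_zero] at this
      simpa using this
  have hmem : sumRight y ∈ LinearMap.ker (toEuclideanLin A₁) := by
    rw [← (LinearMap.ker (toEuclideanLin A₁)).orthogonal_orthogonal]
    exact (Submodule.mem_orthogonal' _ _).mpr fun u hu => LinearMap.congr_fun horth ⟨u, hu⟩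
  simp [toEuclideanLin_fromBlocks_zero, LinearMap.mem_ker.mp hmem]

lemma exists_unitarilySimilar_fromBlocks_superdiagBlockSum (A₁ : Matrix ι κ ℂ) {p : ℕ} {c : ℂ}
    (e : OrthonormalBasis (Fin p) ℂ (LinearMap.ker (toEuclideanLin A₁))ᗮ)
    {f : Fin p → EuclideanSpace ℂ ι} (hf : Orthonormal ℂ f)
    (hAe : ∀ i, toEuclideanLin A₁ (e i) = c • f i) :
    ∃ q, UnitarilySimilar (fromBlocks 0 A₁ 0 0 : Matrix (ι ⊕ κ) (ι ⊕ κ) ℂ)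
      (superdiagBlockSum p q c) := by
  set A : Matrix (ι ⊕ κ) (ι ⊕ κ) ℂ := fromBlocks 0 A₁ 0 0
  obtain ⟨q, b, hb⟩ := (orthonormal_sumElim_pair hf
    (e.orthonormal.comp_linearIsometry (Submodule.subtypeₗᵢ _))).exists_orthonormalBasis_sum
  have hb0 (i : Fin p) : b (Sum.inl (0, i)) = sumElim (f i) 0 := hb (0, i)
  have hb1 (i : Fin p) : b (Sum.inl (1, i)) = sumElim 0 (e i : EuclideanSpace ℂ κ) := hb (1, i)
  have hA0 (i : Fin p) : toEuclideanLin A (b (Sum.inl (0, i))) = 0 := by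
    simp [A, hb0, toEuclideanLin_fromBlocks_zero]
  have hA1 (i : Fin p) : toEuclideanLin A (b (Sum.inl (1, i))) = c • b (Sum.inl (0, i)) := by
    simp [A, hb0, hb1, toEuclideanLin_fromBlocks_zero, hAe, ← sumElim_smul]
  have hA2 (k : Fin q) : toEuclideanLin A (b (Sum.inr k)) = 0 :=
    toEuclideanLin_fromBlocks_zero_eq_zero_of_inner_eq_zero A₁ e fun i => by
      rw [← hb1]
      exact b.orthonormal.inner_eq_zero Sum.inl_ne_inr
  refine ⟨q, unitarilySimilar_of_orthonormalBasis b ?_⟩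
  rintro (⟨k', i⟩ | k') (⟨k, j⟩ | k) <;> (try fin_cases k) <;> (try fin_cases k') <;>
    simp [hA0, hA1, hA2, superdiagBlockSum, blockDiagonal_apply, eq_comm]

lemma exists_unitarilySimilar_of_l2_opNorm_eq_reducedMinModulus (A₁ : Matrix ι κ ℂ)
    (h : ‖A₁‖ = reducedMinModulus A₁) :
    ∃ p q, UnitarilySimilar (fromBlocks 0 A₁ 0 0 : Matrix (ι ⊕ κ) (ι ⊕ κ) ℂ)
      (superdiagBlockSum p q (reducedMinModulus A₁)) := by
  have hnorm : ∀ v ∈ (LinearMap.ker (toEuclideanLin A₁))ᗮ,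
      ‖toEuclideanLin A₁ v‖ = reducedMinModulus A₁ * ‖v‖ := fun v hv =>
    le_antisymm (h ▸ A₁.norm_toEuclideanLin_apply_le v) (reducedMinModulus_mul_norm_le A₁ hv)
  obtain ⟨p, e, f, hf, hAe⟩ :=
    (toEuclideanLin A₁).exists_orthonormalBasis_ker_orthogonal_map_eq_smul
      (reducedMinModulus_nonneg A₁) hnorm
  obtain ⟨q, hq⟩ := exists_unitarilySimilar_fromBlocks_superdiagBlockSum A₁ e hf hAe
  exact ⟨p, q, hq⟩

end

/-- For `A = [[0, A₁], [0, 0]]` and `A''' = [[0, γ(A₁)], [0, 0]]`, equality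
`w(A) = w(A''')` holds iff `A` is unitarily similar to a direct sum `A''' ⊕ ⋯ ⊕ A''' ⊕ 0` of
finitely many copies of `A'''` together with a zero matrix. -/
theorem numRadius_two_blocks_eq_superdiag_reducedMinModulus_iff {n₁ n₂ : ℕ}
    (A₁ : Matrix (Fin n₁) (Fin n₂) ℂ) :
    numRadius (Matrix.fromBlocks (0 : Matrix (Fin n₁) (Fin n₁) ℂ) A₁ 0 0)
        = numRadius (!![0, (reducedMinModulus A₁ : ℂ); 0, 0]) ↔
      ∃ p q : ℕ,
        UnitarilySimilar (Matrix.fromBlocks (0 : Matrix (Fin n₁) (Fin n₁) ℂ) A₁ 0 0)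
          (Matrix.fromBlocks
            (Matrix.blockDiagonal fun _ : Fin p => !![0, (reducedMinModulus A₁ : ℂ); 0, 0])
            0 0 (0 : Matrix (Fin q) (Fin q) ℂ)) := by
  have hγ := reducedMinModulus_nonneg A₁
  rw [numRadius_fromBlocks_zero, numRadius_superdiag, Complex.norm_real, Real.norm_of_nonneg hγ]
  constructor
  · intro h
    exact exists_unitarilySimilar_of_l2_opNorm_eq_reducedMinModulus A₁ (by linarith)
  · rintro ⟨p, q, hsim⟩
    have hle : ‖A₁‖ ≤ reducedMinModulus A₁ := by
      simpa [l2_opNorm_fromBlocks_zero, Real.norm_of_nonneg hγ] using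
        hsim.l2_opNorm_le.trans (l2_opNorm_superdiagBlockSum_le (p := p) (q := q))
    linarith [reducedMinModulus_le_l2_opNorm A₁]
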